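/- arXiv:2407.02923 — 2 statements merged into one kernel-verified Lean document; each statement's English description precedes it below -/
import Mathlib

section
/- Let n be a positive integer and let ρ be any n-qubit density matrix (a positive semidefinite complex 2ⁿ×2ⁿ matrix with trace 1). For a multi-index k : Fin n → Fin 6, let Π_k be the tensor product of the single-qubit Pauli POVM effects π_{k(1)}, …, π_{k(n)} and let D_k be the tensor product of the corresponding classical-shadow snapshots d_{k(1)}, …, d_{k(n)}. Then the second moment of the canonical classical-shadow estimator of the observable O = X^{⊗n} satisfies Σ_{k : Fin n → Fin 6} Tr[Π_k ρ] · (Tr[O · D_k])² = 3ⁿ. -/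
open Matrix
open scoped ComplexOrder

/-- Pauli `X`. -/
def PX : Matrix (Fin 2) (Fin 2) ℂ := !![0, 1; 1, 0]
/-- Pauli `Y`. -/
def PY : Matrix (Fin 2) (Fin 2) ℂ := !![0, -Complex.I; Complex.I, 0]
/-- Pauli `Z`. -/
def PZ : Matrix (Fin 2) (Fin 2) ℂ := !![1, 0; 0, -1]

/-- The six single-qubit Pauli POVM effects. -/
noncomputable def pauliPOVM : Fin 6 → Matrix (Fin 2) (Fin 2) ℂ :=
  ![(1 / 6 : ℂ) • (1 + PZ), (1 / 6 : ℂ) • (1 - PZ),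
    (1 / 6 : ℂ) • (1 + PX), (1 / 6 : ℂ) • (1 - PX),
    (1 / 6 : ℂ) • (1 + PY), (1 / 6 : ℂ) • (1 - PY)]

/-- The classical-shadow snapshots `(I ± 3P)/2`. -/
noncomputable def shadowDual : Fin 6 → Matrix (Fin 2) (Fin 2) ℂ :=
  ![(1 / 2 : ℂ) • (1 + (3 : ℂ) • PZ), (1 / 2 : ℂ) • (1 - (3 : ℂ) • PZ),
    (1 / 2 : ℂ) • (1 + (3 : ℂ) • PX), (1 / 2 : ℂ) • (1 - (3 : ℂ) • PX),
    (1 / 2 : ℂ) • (1 + (3 : ℂ) • PY), (1 / 2 : ℂ) • (1 - (3 : ℂ) • PY)]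

/-- The `n`-qubit tensor-product effect `Π_k = π_{k 1} ⊗ ⋯ ⊗ π_{k n}`. -/
noncomputable def povmN (n : ℕ) (k : Fin n → Fin 6) :
    Matrix (Fin n → Fin 2) (Fin n → Fin 2) ℂ :=
  Matrix.of fun s t => ∏ i, pauliPOVM (k i) (s i) (t i)

/-- The `n`-qubit tensor-product snapshot `D_k = d_{k 1} ⊗ ⋯ ⊗ d_{k n}`. -/
noncomputable def dualN (n : ℕ) (k : Fin n → Fin 6) :
    Matrix (Fin n → Fin 2) (Fin n → Fin 2) ℂ :=
  Matrix.of fun s t => ∏ i, shadowDual (k i) (s i) (t i)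

/-- The `n`-fold tensor power of a single-qubit matrix. -/
def tensorPow (n : ℕ) (P : Matrix (Fin 2) (Fin 2) ℂ) :
    Matrix (Fin n → Fin 2) (Fin n → Fin 2) ℂ :=
  Matrix.of fun s t => ∏ i, P (s i) (t i)

/-!
The canonical estimator factorizes over the qubits: with `w j = Tr[X d_j]²`, the weight
`ω_k²` is `∏ᵢ w (k i)` and `Π_k` is a tensor product, so by multilinearity
`∑ₖ ω_k² Π_k = (∑ⱼ w j π_j)^{⊗n}`. On one qubit only the two `X`-outcomes contribute,
each with `w = 9` and `π_3 + π_4 = I/3`, so `∑ⱼ w j π_j = 3 I`. Hence the second moment is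
`Tr[3ⁿ ρ] = 3ⁿ` for every state.
-/

open Finset

namespace Matrix

variable {ι m R : Type*} [Fintype ι] [CommSemiring R]

def piKronecker (A : ι → Matrix m m R) : Matrix (ι → m) (ι → m) R :=
  of fun s t => ∏ i, A i (s i) (t i)

theorem piKronecker_mul [DecidableEq ι] [Fintype m] (A B : ι → Matrix m m R) :
    piKronecker A * piKronecker B = piKronecker fun i => A i * B i := by
  ext s u
  simp only [piKronecker, mul_apply, of_apply, Fintype.prod_sum, ← prod_mul_distrib]

theorem trace_piKronecker [DecidableEq ι] [Fintype m] (A : ι → Matrix m m R) :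
    (piKronecker A).trace = ∏ i, (A i).trace := by
  simp only [trace, diag, piKronecker, of_apply, Fintype.prod_sum]

theorem sum_piKronecker [DecidableEq ι] {κ : Type*} [Fintype κ] (A : ι → κ → Matrix m m R) :
    ∑ k : ι → κ, piKronecker (fun i => A i (k i)) = piKronecker fun i => ∑ j, A i j := by
  ext s t
  simp only [piKronecker, sum_apply, of_apply, Fintype.prod_sum]

theorem prod_smul_piKronecker (c : ι → R) (A : ι → Matrix m m R) :
    (∏ i, c i) • piKronecker A = piKronecker fun i => c i • A i := by
  ext s t
  simp only [piKronecker, smul_apply, of_apply, smul_eq_mul, prod_mul_distrib]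

theorem piKronecker_one [DecidableEq m] : piKronecker (fun _ : ι => (1 : Matrix m m R)) = 1 := by
  ext s t
  by_cases hst : s = t
  · subst hst
    simp [piKronecker]
  · obtain ⟨i, hi⟩ := Function.ne_iff.mp hst
    rw [one_apply_ne hst]
    exact prod_eq_zero (mem_univ i) (one_apply_ne hi)

end Matrix

open Matrix

theorem sum_sq_trace_PX_mul_shadowDual_smul_pauliPOVM :
    ∑ j, (PX * shadowDual j).trace ^ 2 • pauliPOVM j = (3 : ℂ) • 1 := by
  ext a b
  fin_cases a <;> fin_cases b <;>
    simp [Fin.sum_univ_six, pauliPOVM, shadowDual, PX, PY, PZ, one_fin_two, trace_fin_two] <;>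
    norm_num

theorem tensorPow_eq_piKronecker (n : ℕ) (P : Matrix (Fin 2) (Fin 2) ℂ) :
    tensorPow n P = piKronecker fun _ => P :=
  rfl

theorem povmN_eq_piKronecker (n : ℕ) (k : Fin n → Fin 6) :
    povmN n k = piKronecker fun i => pauliPOVM (k i) :=
  rfl

theorem dualN_eq_piKronecker (n : ℕ) (k : Fin n → Fin 6) :
    dualN n k = piKronecker fun i => shadowDual (k i) :=
  rfl

theorem trace_tensorPow_mul_dualN (n : ℕ) (P : Matrix (Fin 2) (Fin 2) ℂ) (k : Fin n → Fin 6) :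
    (tensorPow n P * dualN n k).trace = ∏ i, (P * shadowDual (k i)).trace := by
  rw [tensorPow_eq_piKronecker, dualN_eq_piKronecker, piKronecker_mul, trace_piKronecker]

theorem sum_sq_trace_smul_povmN (n : ℕ) :
    ∑ k : Fin n → Fin 6, (tensorPow n PX * dualN n k).trace ^ 2 • povmN n k = (3 : ℂ) ^ n • 1 :=
  calc ∑ k : Fin n → Fin 6, (tensorPow n PX * dualN n k).trace ^ 2 • povmN n k
      = ∑ k : Fin n → Fin 6, piKronecker fun i =>
          (PX * shadowDual (k i)).trace ^ 2 • pauliPOVM (k i) := by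
        simp only [trace_tensorPow_mul_dualN, povmN_eq_piKronecker, ← prod_pow,
          prod_smul_piKronecker]
    _ = piKronecker fun _ => (3 : ℂ) • 1 := by
        rw [← sum_sq_trace_PX_mul_shadowDual_smul_pauliPOVM]
        exact sum_piKronecker fun _ j => (PX * shadowDual j).trace ^ 2 • pauliPOVM j
    _ = (3 : ℂ) ^ n • 1 := by
        rw [← prod_smul_piKronecker, piKronecker_one, prod_const, card_univ, Fintype.card_fin]

theorem shadow_second_moment_global_X_general {n : ℕ}
    (ρ : Matrix (Fin n → Fin 2) (Fin n → Fin 2) ℂ)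
    (htr : ρ.trace = 1) :
    ∑ k : Fin n → Fin 6,
        (povmN n k * ρ).trace * ((tensorPow n PX * dualN n k).trace) ^ 2 =
      (3 : ℂ) ^ n := by
  calc ∑ k : Fin n → Fin 6,
        (povmN n k * ρ).trace * ((tensorPow n PX * dualN n k).trace) ^ 2
      = ((∑ k : Fin n → Fin 6, (tensorPow n PX * dualN n k).trace ^ 2 • povmN n k) * ρ).trace := by
        simp only [sum_mul, trace_sum, smul_mul, trace_smul, smul_eq_mul, mul_comm]
    _ = (3 : ℂ) ^ n := by
        rw [sum_sq_trace_smul_povmN, smul_mul, one_mul, trace_smul, htr, smul_eq_mul, mul_one]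

/-- For any `n`-qubit density matrix `ρ`, the second moment of the canonical
classical-shadow estimator of the global observable `O = X^{⊗n}` equals `3ⁿ`:
`∑ₖ Tr[Π_k ρ] · (Tr[O·D_k])² = 3ⁿ`. -/
theorem shadow_second_moment_global_X {n : ℕ} (hn : 0 < n)
    (ρ : Matrix (Fin n → Fin 2) (Fin n → Fin 2) ℂ)
    (hρ : ρ.PosSemidef) (htr : ρ.trace = 1) :
    ∑ k : Fin n → Fin 6,
        (povmN n k * ρ).trace * ((tensorPow n PX * dualN n k).trace) ^ 2 =
      (3 : ℂ) ^ n :=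
  shadow_second_moment_global_X_general ρ htr
end

section
/- Let n be a positive integer. For a multi-index k : Fin n → Fin 6, let Π_k be the tensor product of the single-qubit Pauli POVM effects π_{k(1)}, …, π_{k(n)} and let D_k be the tensor product of the corresponding classical-shadow snapshots d_{k(1)}, …, d_{k(n)}. Then for every complex 2ⁿ×2ⁿ matrix A, A = Σ_{k : Fin n → Fin 6} Tr[A·D_k] · Π_k; i.e. the tensor-product snapshots form a dual frame to the n-qubit tensor-product Pauli-6 POVM, giving an unbiased reconstruction of every n-qubit operator. -/
open Matrix

/-! The identity `A = ∑ₖ Tr[A Dₖ] Πₖ` for all `A` is equivalent to the completeness relation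
`∑ₖ (Dₖ)ᵥᵤ (Πₖ)ₛₜ = δᵤₛ δᵥₜ` (test it on the matrix units). For tensor products over a multi-index
the left side of that relation factors as a product over the sites of the one-site sums, so the
relation for one qubit, a finite computation, gives it for `n` qubits. -/

section DualFrame

variable {K m R : Type*} [Fintype K] [Fintype m] [DecidableEq m] [CommSemiring R]

def IsDualFrame (P D : K → Matrix m m R) : Prop :=
  ∀ A : Matrix m m R, A = ∑ k, (A * D k).trace • P k

theorem isDualFrame_iff_sum_apply_mul_apply {P D : K → Matrix m m R} :
    IsDualFrame P D ↔
      ∀ u v s t, ∑ k, D k v u * P k s t = if u = s ∧ v = t then 1 else 0 := by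
  constructor
  · intro h u v s t
    simpa [trace_single_mul, Matrix.sum_apply, single_apply] using
      (congrFun₂ (h (single u v 1)) s t).symm
  · intro h A
    ext s t
    calc A s t = ∑ u, ∑ v, A u v * if u = s ∧ v = t then 1 else 0 := by
          simp [ite_and, mul_ite]
      _ = ∑ k, (A * D k).trace * P k s t := by
          simp only [← h, trace, diag, mul_apply, Finset.mul_sum, Finset.sum_mul, mul_assoc]
          rw [eq_comm, Finset.sum_comm]
          exact Finset.sum_congr rfl fun _ _ => Finset.sum_comm
      _ = (∑ k, (A * D k).trace • P k) s t := by simp [Matrix.sum_apply]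

end DualFrame

section PiTensor

variable {ι m R : Type*} [Fintype ι] [CommSemiring R]

def piTensor (M : ι → Matrix m m R) : Matrix (ι → m) (ι → m) R :=
  of fun s t => ∏ i, M i (s i) (t i)

theorem IsDualFrame.piTensor {K : Type*} [Fintype K] [Fintype m] [DecidableEq m] [DecidableEq ι]
    {P D : K → Matrix m m R} (h : IsDualFrame P D) :
    IsDualFrame (fun k : ι → K => piTensor fun i => P (k i))
      (fun k => piTensor fun i => D (k i)) := by
  rw [isDualFrame_iff_sum_apply_mul_apply] at h ⊢
  intro u v s t
  simp only [_root_.piTensor, of_apply, ← Finset.prod_mul_distrib]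
  rw [← Fintype.prod_sum fun i j => D j (v i) (u i) * P j (s i) (t i)]
  simp only [h, Fintype.prod_ite_zero, Finset.prod_const_one, funext_iff, forall_and]

end PiTensor

theorem isDualFrame_pauliPOVM_shadowDual : IsDualFrame pauliPOVM shadowDual := by
  rw [isDualFrame_iff_sum_apply_mul_apply]
  intro u v s t
  fin_cases u <;> fin_cases v <;> fin_cases s <;> fin_cases t <;>
    simp [Fin.sum_univ_six, pauliPOVM, shadowDual, PX, PY, PZ, one_apply] <;> ring_nf <;>
    norm_num [Complex.I_sq]

theorem tensor_shadow_dual_frame_general {n : ℕ}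
    (A : Matrix (Fin n → Fin 2) (Fin n → Fin 2) ℂ) :
    A = ∑ k : Fin n → Fin 6, (A * dualN n k).trace • povmN n k :=
  isDualFrame_pauliPOVM_shadowDual.piTensor A

/-- The tensor-product classical-shadow snapshots form a dual frame to the
`n`-qubit tensor-product Pauli-6 POVM: every `n`-qubit operator `A` satisfies
`A = ∑ₖ Tr[A·D_k] · Π_k`, giving an unbiased reconstruction. -/
theorem tensor_shadow_dual_frame {n : ℕ} (hn : 0 < n)
    (A : Matrix (Fin n → Fin 2) (Fin n → Fin 2) ℂ) :
    A = ∑ k : Fin n → Fin 6, (A * dualN n k).trace • povmN n k :=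
  tensor_shadow_dual_frame_general A
end
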